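/- arXiv:2008.03061 — 2 statements merged into one kernel-verified Lean document; each statement's English description precedes it below -/
import Mathlib

section
/- Let G be a graph admitting an HC-tree of DC-cost W, and let k ≥ 1. Then the graph G^{(k)} (the disjoint union of k copies of G) admits an HC-tree of DC-cost exactly k²·W. In particular, the maximum DC-cost over HC-trees of G^{(k)} is at least k² times the maximum DC-cost over HC-trees of G. -/
/-- A rooted binary tree whose leaves are labelled by vertices of type `V`.
Every internal node has exactly two children. -/
inductive HCTree (V : Type) where
  | leaf : V → HCTree V
  | node : HCTree V → HCTree V → HCTree V

namespace HCTree

/-- The list of leaf labels of an HC-tree, from left to right. -/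
def leaves {V : Type} : HCTree V → List V
  | leaf v => [v]
  | node l r => leaves l ++ leaves r

open Classical in
/-- The Dasgupta cost of an HC-tree on a graph `G`: the sum over all edges `uv` of `G`
of the number of leaves of the subtree rooted at the least common ancestor of `u` and `v`.
Equivalently (as computed here, recursively), at each internal node we add
(number of leaves below the node) times (number of edges split at that node). -/
noncomputable def dcCost {V : Type} (G : SimpleGraph V) : HCTree V → ℕ
  | leaf _ => 0
  | node l r =>
      dcCost G l + dcCost G r +
        (l.leaves.length + r.leaves.length) *
          (l.leaves.map (fun u => r.leaves.countP (fun v => decide (G.Adj u v)))).sum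

end HCTree

open HCTree

/-- `T` together with the implicit leaf labelling is an HC-tree of a graph on vertex set `V`:
the leaf labels are pairwise distinct and every vertex occurs as a leaf label,
i.e. the labelling is a bijection between `V` and the leaves of `T`. -/
def IsHCTree {V : Type} (T : HCTree V) : Prop :=
  T.leaves.Nodup ∧ ∀ v : V, v ∈ T.leaves

/-- `W` is the maximum DC-cost over all HC-trees of `G`. -/
def IsMaxCost {V : Type} (G : SimpleGraph V) (W : ℕ) : Prop :=
  (∃ T : HCTree V, IsHCTree T ∧ dcCost G T = W) ∧
  ∀ T : HCTree V, IsHCTree T → dcCost G T ≤ W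

/-- `W` is the minimum DC-cost over all HC-trees of `G`. -/
def IsMinCost {V : Type} (G : SimpleGraph V) (W : ℕ) : Prop :=
  (∃ T : HCTree V, IsHCTree T ∧ dcCost G T = W) ∧
  ∀ T : HCTree V, IsHCTree T → W ≤ dcCost G T

/-- The disjoint union `G^(k)` of `k` copies of `G`, on vertex set `V × Fin k`. -/
def copies {V : Type} (G : SimpleGraph V) (k : ℕ) : SimpleGraph (V × Fin k) where
  Adj a b := a.2 = b.2 ∧ G.Adj a.1 b.1
  symm := ⟨fun _ _ h => ⟨h.1.symm, h.2.symm⟩⟩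
  loopless := ⟨fun a h => G.irrefl h.2⟩

/-! Replace every leaf `v` of an HC-tree of `G` by a tree on the `k` copies of `v`. No edge of
`G^(k)` joins two copies of one vertex, so these new subtrees cost nothing; at every old internal
node both the number of leaves below it and the number of edges it separates are multiplied by
`k`, so the total cost is multiplied by `k²`. Applied to a maximising tree of `G`, this gives the
bound on the maximum. -/

namespace HCTree

variable {α β : Type}

def bind : HCTree α → (α → HCTree β) → HCTree β
  | leaf a, f => f a
  | node l r, f => node (l.bind f) (r.bind f)

theorem leaves_bind (T : HCTree α) (f : α → HCTree β) :
    (T.bind f).leaves = T.leaves.flatMap (fun a => (f a).leaves) := by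
  induction T with
  | leaf a => simp [bind, leaves]
  | node l r ihl ihr => simp [bind, leaves, ihl, ihr]

def caterpillar (a : α) : List α → HCTree α
  | [] => leaf a
  | b :: l => node (leaf a) (caterpillar b l)

theorem leaves_caterpillar (a : α) (l : List α) : (caterpillar a l).leaves = a :: l := by
  induction l generalizing a with
  | nil => rfl
  | cons b l ih => simp [caterpillar, leaves, ih]

open Classical in
theorem dcCost_eq_zero_of_forall_not_adj (G : SimpleGraph α) (T : HCTree α)
    (h : ∀ u ∈ T.leaves, ∀ v ∈ T.leaves, ¬ G.Adj u v) : dcCost G T = 0 := by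
  induction T with
  | leaf a => rfl
  | node l r ihl ihr =>
    simp only [leaves, List.mem_append] at h
    have hcut : (l.leaves.map fun u => r.leaves.countP fun v => decide (G.Adj u v)).sum = 0 :=
      List.sum_eq_zero fun _ hx => by
        obtain ⟨u, hu, rfl⟩ := List.mem_map.1 hx
        exact List.countP_eq_zero.2 fun v hv => by simpa using h u (.inl hu) v (.inr hv)
    rw [dcCost, ihl (fun u hu v hv => h u (.inl hu) v (.inl hv)),
      ihr (fun u hu v hv => h u (.inr hu) v (.inr hv)), hcut, Nat.mul_zero]

end HCTree

open HCTree

section Copies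

variable {V : Type} {k : ℕ}

open Classical in
theorem countP_copies_adj_product (G : SimpleGraph V) (u : V) (i : Fin k) (B : List V) :
    (B ×ˢ List.finRange k).countP (fun y => decide ((copies G k).Adj (u, i) y)) =
      B.countP (fun v => decide (G.Adj u v)) := by
  induction B with
  | nil => rfl
  | cons b B ih =>
    rw [List.product_cons, List.countP_append, ih, List.countP_cons, List.countP_map]
    by_cases hub : G.Adj u b
    · have : (List.finRange k).countP (fun j => decide ((copies G k).Adj (u, i) (b, j))) = 1 := by
        rw [← List.count_finRange i, List.count]
        exact List.countP_congr fun j _ => by simp [copies, hub, eq_comm (a := i)]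
      simp [Function.comp_def, this, hub, Nat.add_comm]
    · simp [copies, hub]

theorem sum_map_fst_product_finRange (g : V → ℕ) (A : List V) :
    ((A ×ˢ List.finRange k).map fun p => g p.1).sum = k * (A.map g).sum := by
  induction A with
  | nil => simp
  | cons a A ih => simp [List.product_cons, ih, Function.comp_def, List.map_const', Nat.mul_add]

variable (f : V → HCTree (V × Fin k)) (hf : ∀ v, (f v).leaves = (List.finRange k).map (v, ·))
include hf

theorem leaves_bind_eq_product (T : HCTree V) :
    (T.bind f).leaves = T.leaves ×ˢ List.finRange k := by
  rw [leaves_bind]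
  simp only [hf]
  rfl

theorem IsHCTree.bind {T : HCTree V} (hT : IsHCTree T) : IsHCTree (T.bind f) := by
  rw [IsHCTree, leaves_bind_eq_product f hf]
  exact ⟨hT.1.product (List.nodup_finRange k), fun ⟨v, i⟩ =>
    List.mem_product.2 ⟨hT.2 v, List.mem_finRange i⟩⟩

open Classical in
theorem dcCost_copies_bind (G : SimpleGraph V) (T : HCTree V) :
    dcCost (copies G k) (T.bind f) = k ^ 2 * dcCost G T := by
  induction T with
  | leaf v =>
    refine dcCost_eq_zero_of_forall_not_adj _ _ fun x hx y hy hxy => ?_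
    simp only [HCTree.bind, hf, List.mem_map] at hx hy
    obtain ⟨i, -, rfl⟩ := hx
    obtain ⟨j, -, rfl⟩ := hy
    exact G.irrefl hxy.2
  | node l r ihl ihr =>
    simp only [HCTree.bind, dcCost, ihl, ihr, leaves_bind_eq_product f hf, List.length_product,
      List.length_finRange, countP_copies_adj_product,
      sum_map_fst_product_finRange (fun u => r.leaves.countP fun v => decide (G.Adj u v))]
    ring

end Copies

def fiberTree {V : Type} (n : ℕ) (v : V) : HCTree (V × Fin (n + 1)) :=
  caterpillar (v, 0) ((List.finRange n).map fun i => (v, i.succ))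

theorem leaves_fiberTree {V : Type} (n : ℕ) (v : V) :
    (fiberTree n v).leaves = (List.finRange (n + 1)).map (v, ·) := by
  simp [fiberTree, leaves_caterpillar, List.finRange_succ]

/-- If `G` admits an HC-tree of DC-cost `W` and `k ≥ 1`, then the
disjoint union `G^(k)` of `k` copies of `G` admits an HC-tree of DC-cost exactly `k² W`.
In particular the maximum DC-cost over HC-trees of `G^(k)` is at least `k²` times the
maximum DC-cost over HC-trees of `G`. -/
theorem copies_dcCost_exists {V : Type} (G : SimpleGraph V) (W : ℕ)
    (T : HCTree V) (hT : IsHCTree T) (hW : dcCost G T = W) (k : ℕ) (hk : 1 ≤ k) :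
    (∃ T' : HCTree (V × Fin k), IsHCTree T' ∧ dcCost (copies G k) T' = k ^ 2 * W) ∧
    (∀ Wmax Wkmax : ℕ, IsMaxCost G Wmax → IsMaxCost (copies G k) Wkmax →
      k ^ 2 * Wmax ≤ Wkmax) := by
  obtain ⟨n, rfl⟩ : ∃ n, k = n + 1 := ⟨k - 1, by omega⟩
  have blowUp (S : HCTree V) (hS : IsHCTree S) :
      IsHCTree (S.bind (fiberTree n)) ∧
        dcCost (copies G (n + 1)) (S.bind (fiberTree n)) = (n + 1) ^ 2 * dcCost G S :=
    ⟨hS.bind _ (leaves_fiberTree n), dcCost_copies_bind _ (leaves_fiberTree n) G S⟩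
  constructor
  · exact ⟨T.bind (fiberTree n), (blowUp T hT).1, hW ▸ (blowUp T hT).2⟩
  · rintro Wmax Wkmax ⟨⟨S, hS, rfl⟩, -⟩ ⟨-, hmax⟩
    exact (blowUp S hS).2 ▸ hmax _ (blowUp S hS).1
end

section
/- The complete split graph Q_{2,3} is not max-well-behaved: the disjoint union of two copies of Q_{2,3} admits an HC-tree of DC-cost 130, which is strictly greater than 2² · 32 = 128, where 32 is the maximum DC-cost over all HC-trees of Q_{2,3}. -/
open HCTree

/-- The complete split graph `Q_{2,3}`: vertices `0,1,2` form an independent set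
(the `s_i`), vertices `3,4` form a clique (the `c_j`), and every `s_i` is adjacent to
every `c_j`.  Its edges are exactly `c1c2` and the six edges `s_i c_j`. -/
def Q23 : SimpleGraph (Fin 5) :=
  SimpleGraph.fromRel (fun a b => 3 ≤ a.val ∨ 3 ≤ b.val)

/-! Every HC-tree of `Q_{2,3}` is a binary bracketing of one of the `5!` orderings of its vertices,
so the maximum `32` is a finite check. The tree of cost `130` on two copies has, below the root, the
clique of the first copy with the independent set of the second on one side and the remaining
vertices on the other: all twelve clique–independent-set edges are then split at the root and cost
`10` each, while the two clique edges cost `5` each. -/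

namespace HCTree

variable {V : Type}

/-- `dcCost` with adjacency decided by an instance instead of classically, so that the kernel can
evaluate it. -/
def dcCostDec (G : SimpleGraph V) [DecidableRel G.Adj] : HCTree V → ℕ
  | leaf _ => 0
  | node l r =>
      dcCostDec G l + dcCostDec G r +
        (l.leaves.length + r.leaves.length) *
          (l.leaves.map (fun u => r.leaves.countP (fun v => decide (G.Adj u v)))).sum

theorem dcCost_eq_dcCostDec (G : SimpleGraph V) [DecidableRel G.Adj] (T : HCTree V) :
    dcCost G T = dcCostDec G T := by
  induction T with
  | leaf _ => rfl
  | node l r ihl ihr =>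
    simp only [dcCost, dcCostDec, ihl, ihr]
    congr!

theorem leaves_ne_nil (T : HCTree V) : T.leaves ≠ [] := by
  induction T with
  | leaf _ => simp [leaves]
  | node l _ ihl _ => simp [leaves, ihl]

/-- All ways of writing a list as `a ++ b` with `a` nonempty. -/
def prefixSplits : List V → List (List V × List V)
  | [] => []
  | a :: l => ([a], l) :: (prefixSplits l).map fun p => (a :: p.1, p.2)

theorem mem_prefixSplits {a : List V} (ha : a ≠ []) (b : List V) :
    (a, b) ∈ prefixSplits (a ++ b) := by
  induction a with
  | nil => exact absurd rfl ha
  | cons x a ih =>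
    rcases a with _ | ⟨y, a⟩
    · simp [prefixSplits]
    · exact List.mem_cons_of_mem _ (List.mem_map.mpr ⟨_, ih (List.cons_ne_nil y a), rfl⟩)

/-- The HC-trees of depth at most `n` whose leaf list is `l`. -/
def treesWithLeaves : ℕ → List V → List (HCTree V)
  | _, [v] => [leaf v]
  | 0, _ => []
  | n + 1, l => (prefixSplits l).flatMap fun p =>
      (treesWithLeaves n p.1).flatMap fun L => (treesWithLeaves n p.2).map (node L)

theorem mem_treesWithLeaves (T : HCTree V) {n : ℕ} (hn : T.leaves.length ≤ n + 1) :
    T ∈ treesWithLeaves n T.leaves := by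
  induction T generalizing n with
  | leaf v => cases n <;> simp [treesWithLeaves, leaves]
  | node l r ihl ihr =>
    have hl := List.length_pos_iff.mpr (leaves_ne_nil l)
    have hr := List.length_pos_iff.mpr (leaves_ne_nil r)
    simp only [leaves, List.length_append] at hn ⊢
    obtain ⟨m, rfl⟩ : ∃ m, n = m + 1 := ⟨n - 1, by omega⟩
    rw [treesWithLeaves]
    · exact List.mem_flatMap.mpr ⟨_, mem_prefixSplits (leaves_ne_nil l) _,
        List.mem_flatMap.mpr ⟨l, ihl (by omega), List.mem_map.mpr ⟨r, ihr (by omega), rfl⟩⟩⟩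
    · intro v hv
      have := congrArg List.length hv
      simp only [List.length_append, List.length_singleton] at this
      omega

theorem dcCost_le_of_forall_permutations (G : SimpleGraph V) [DecidableRel G.Adj] {l : List V}
    (hl : l.Nodup) (hmem : ∀ v, v ∈ l) {W : ℕ}
    (h : ∀ p ∈ l.permutations', ∀ T ∈ treesWithLeaves (l.length - 1) p, dcCostDec G T ≤ W)
    {T : HCTree V} (hT : IsHCTree T) : dcCost G T ≤ W := by
  have hperm : T.leaves.Perm l :=
    (List.perm_ext_iff_of_nodup hT.1 hl).2 fun v => iff_of_true (hT.2 v) (hmem v)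
  have hpos := List.length_pos_iff.mpr (leaves_ne_nil T)
  rw [dcCost_eq_dcCostDec]
  refine h _ (List.mem_permutations'.2 hperm) T (mem_treesWithLeaves T ?_)
  rw [hperm.length_eq] at hpos ⊢
  omega

end HCTree

instance {V : Type} [Fintype V] [DecidableEq V] (T : HCTree V) : Decidable (IsHCTree T) :=
  inferInstanceAs (Decidable (_ ∧ _))

instance : DecidableRel Q23.Adj :=
  inferInstanceAs (DecidableRel (SimpleGraph.fromRel _).Adj)

instance {V : Type} (G : SimpleGraph V) [DecidableRel G.Adj] (k : ℕ) :
    DecidableRel (copies G k).Adj :=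
  fun a b => inferInstanceAs (Decidable (a.2 = b.2 ∧ G.Adj a.1 b.1))

theorem isMaxCost_Q23 : IsMaxCost Q23 32 :=
  ⟨⟨.node (.node (.node (.node (.leaf 0) (.leaf 1)) (.leaf 2)) (.leaf 3)) (.leaf 4),
      by decide, by rw [dcCost_eq_dcCostDec]; decide⟩,
    fun _ hT => dcCost_le_of_forall_permutations Q23 (List.nodup_finRange 5) List.mem_finRange
      (by decide +kernel) hT⟩

theorem exists_isHCTree_dcCost_copies_Q23 :
    ∃ T : HCTree (Fin 5 × Fin 2), IsHCTree T ∧ dcCost (copies Q23 2) T = 130 :=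
  ⟨.node
    (.node
      (.node (.node (.leaf (4, 0)) (.leaf (0, 1))) (.leaf (1, 1)))
      (.node (.leaf (3, 0)) (.leaf (2, 1))))
    (.node
      (.node (.node (.node (.leaf (0, 0)) (.leaf (1, 0))) (.leaf (2, 0))) (.leaf (3, 1)))
      (.leaf (4, 1))),
    by decide, by rw [dcCost_eq_dcCostDec]; decide⟩

/-- `Q_{2,3}` is not max-well-behaved: while 32 is the maximum DC-cost
over all HC-trees of `Q_{2,3}`, the disjoint union of two copies of `Q_{2,3}` admits an
HC-tree of DC-cost 130, which is strictly greater than `2² · 32 = 128`. -/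
theorem Q23_not_maxWellBehaved :
    IsMaxCost Q23 32 ∧
    (∃ T : HCTree (Fin 5 × Fin 2), IsHCTree T ∧ dcCost (copies Q23 2) T = 130) ∧
    2 ^ 2 * 32 < 130 :=
  ⟨isMaxCost_Q23, exists_isHCTree_dcCost_copies_Q23, by norm_num⟩
end
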